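/- (Orthogonality of TBiCOR sequences) Suppose the TBiCOR sequences are defined for n = 0,…,k and that ⟨R_n*, L(R_n)⟩ ≠ 0 and ⟨L^T(P_n*), L(P_n)⟩ ≠ 0 for n = 0,…,k. Then for all 0 ≤ i, j ≤ k with i ≠ j: ⟨L(R_i), R_j*⟩ = 0 and ⟨L(P_i), L^T(P_j*)⟩ = 0. -/
import Mathlib


open scoped Matrix

/-- A tensor in `ℝ^{I₁ × ⋯ × I_N}`: a real-valued function on multi-indices. -/
abbrev Tensor {N : ℕ} (I : Fin N → ℕ) := (∀ n, Fin (I n)) → ℝ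

/-- Inner product `⟨X, Y⟩ = ∑ᵢ X(i) Y(i)`. -/
noncomputable def tinner {N : ℕ} {I : Fin N → ℕ} (X Y : Tensor I) : ℝ :=
  ∑ i : ∀ n, Fin (I n), X i * Y i

/-- Norm `‖X‖ = ⟨X, X⟩^{1/2}`. -/
noncomputable def tnorm {N : ℕ} {I : Fin N → ℕ} (X : Tensor I) : ℝ :=
  Real.sqrt (tinner X X)

/-- The Sylvester operator `L(X) = X ×₁ A₁ + ⋯ + X ×_N A_N`. -/
noncomputable def sylvOp {N : ℕ} {I : Fin N → ℕ}
    (A : ∀ n, Matrix (Fin (I n)) (Fin (I n)) ℝ) (X : Tensor I) : Tensor I :=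
  fun i => ∑ n : Fin N, ∑ j : Fin (I n), A n (i n) j * X (Function.update i n j)

/-- The transposed Sylvester operator `L^T`, with each `Aₙ` replaced by `Aₙᵀ`. -/
noncomputable def sylvOpT {N : ℕ} {I : Fin N → ℕ}
    (A : ∀ n, Matrix (Fin (I n)) (Fin (I n)) ℝ) : Tensor I → Tensor I :=
  sylvOp (fun n => (A n)ᵀ)

/-- The (T)BiCOR sequences, defined for `n = 0,…,k`, for abstract operators
`Lop` (the Sylvester operator, possibly preconditioned) and `LopT` (its transpose). -/
structure BiCORSeq {N : ℕ} {I : Fin N → ℕ}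
    (Lop LopT : Tensor I → Tensor I) (D X0 : Tensor I) (k : ℕ) where
  X : ℕ → Tensor I
  R : ℕ → Tensor I
  Rs : ℕ → Tensor I
  P : ℕ → Tensor I
  Ps : ℕ → Tensor I
  a : ℕ → ℝ
  b : ℕ → ℝ
  hX0 : X 0 = X0
  hR0 : R 0 = D - Lop X0
  hRs0 : Rs 0 = Lop (R 0)
  hP0 : P 0 = R 0
  hPs0 : Ps 0 = Rs 0
  ha : ∀ n, n < k →
    a n = tinner (Rs n) (Lop (R n)) / tinner (LopT (Ps n)) (Lop (P n))
  hX : ∀ n, n < k → X (n + 1) = X n + a n • P n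
  hR : ∀ n, n < k → R (n + 1) = R n - a n • Lop (P n)
  hRs : ∀ n, n < k → Rs (n + 1) = Rs n - a n • LopT (Ps n)
  hb : ∀ n, n < k →
    b n = tinner (Rs (n + 1)) (Lop (R (n + 1))) / tinner (Rs n) (Lop (R n))
  hP : ∀ n, n < k → P (n + 1) = R (n + 1) + b n • P n
  hPs : ∀ n, n < k → Ps (n + 1) = Rs (n + 1) + b n • Ps n

section helpers
variable {N : ℕ} {I : Fin N → ℕ}

lemma tinner_comm (X Y : Tensor I) : tinner X Y = tinner Y X := by
  simp [tinner, mul_comm]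

lemma tinner_sub_left (X Y Z : Tensor I) : tinner (X - Y) Z = tinner X Z - tinner Y Z := by
  simp [tinner, sub_mul, Finset.sum_sub_distrib]

lemma tinner_add_left (X Y Z : Tensor I) : tinner (X + Y) Z = tinner X Z + tinner Y Z := by
  simp [tinner, add_mul, Finset.sum_add_distrib]

lemma tinner_smul_left (c : ℝ) (X Y : Tensor I) : tinner (c • X) Y = c * tinner X Y := by
  simp [tinner, Finset.mul_sum, mul_assoc]

lemma tinner_sub_right (X Y Z : Tensor I) : tinner X (Y - Z) = tinner X Y - tinner X Z := by
  simp [tinner, mul_sub, Finset.sum_sub_distrib]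

lemma tinner_add_right (X Y Z : Tensor I) : tinner X (Y + Z) = tinner X Y + tinner X Z := by
  simp [tinner, mul_add, Finset.sum_add_distrib]

lemma tinner_smul_right (c : ℝ) (X Y : Tensor I) : tinner X (c • Y) = c * tinner X Y := by
  simp [tinner, Finset.mul_sum]; ring_nf; simp [mul_comm, mul_left_comm]

lemma sylvOp_sub (A : ∀ n, Matrix (Fin (I n)) (Fin (I n)) ℝ) (X Y : Tensor I) :
    sylvOp A (X - Y) = sylvOp A X - sylvOp A Y := by
  funext i; simp [sylvOp, mul_sub, Finset.sum_sub_distrib]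

lemma sylvOp_add (A : ∀ n, Matrix (Fin (I n)) (Fin (I n)) ℝ) (X Y : Tensor I) :
    sylvOp A (X + Y) = sylvOp A X + sylvOp A Y := by
  funext i; simp [sylvOp, mul_add, Finset.sum_add_distrib]

lemma sylvOp_smul (A : ∀ n, Matrix (Fin (I n)) (Fin (I n)) ℝ) (c : ℝ) (X : Tensor I) :
    sylvOp A (c • X) = c • sylvOp A X := by
  funext i; simp [sylvOp, Finset.mul_sum, mul_left_comm]

end helpers

section adj
variable {N : ℕ} {I : Fin N → ℕ}

/-- The index-swap involution used to prove adjointness. -/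
def swapIdx (I : Fin N → ℕ) (n : Fin N) :
    ((∀ m, Fin (I m)) × Fin (I n)) ≃ ((∀ m, Fin (I m)) × Fin (I n)) where
  toFun p := (Function.update p.1 n p.2, p.1 n)
  invFun p := (Function.update p.1 n p.2, p.1 n)
  left_inv p := by
    refine Prod.ext ?_ ?_ <;>
      simp [Function.update_idem, Function.update_eq_self]
  right_inv p := by
    refine Prod.ext ?_ ?_ <;>
      simp [Function.update_idem, Function.update_eq_self]

lemma sylv_adjoint (A : ∀ n, Matrix (Fin (I n)) (Fin (I n)) ℝ) (X Y : Tensor I) :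
    tinner (sylvOp A X) Y = tinner X (sylvOpT A Y) := by
  unfold tinner sylvOp sylvOpT sylvOp
  simp only [Matrix.transpose_apply, Finset.sum_mul, Finset.mul_sum]
  rw [Finset.sum_comm]
  conv_rhs => rw [Finset.sum_comm]
  refine Finset.sum_congr rfl fun n _ => ?_
  have key : ∑ p : ((∀ m, Fin (I m)) × Fin (I n)),
        A n (p.1 n) p.2 * X (Function.update p.1 n p.2) * Y p.1
      = ∑ p : ((∀ m, Fin (I m)) × Fin (I n)),
        X p.1 * (A n p.2 (p.1 n) * Y (Function.update p.1 n p.2)) := by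
    refine Fintype.sum_equiv (swapIdx I n) _ _ fun p => ?_
    simp only [swapIdx, Equiv.coe_fn_mk, Function.update_self, Function.update_idem,
      Function.update_eq_self]
    ring
  simpa [Fintype.sum_prod_type] using key

lemma sylv_adjoint' (A : ∀ n, Matrix (Fin (I n)) (Fin (I n)) ℝ) (X Y : Tensor I) :
    tinner (sylvOpT A X) Y = tinner X (sylvOp A Y) := by
  have := sylv_adjoint (fun n => (A n)ᵀ) X Y
  simpa [sylvOpT, Matrix.transpose_transpose] using this

end adj

lemma sylvOpT_sub {N : ℕ} {I : Fin N → ℕ} (A : ∀ n, Matrix (Fin (I n)) (Fin (I n)) ℝ)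
    (X Y : Tensor I) : sylvOpT A (X - Y) = sylvOpT A X - sylvOpT A Y := sylvOp_sub _ _ _

lemma sylvOpT_add {N : ℕ} {I : Fin N → ℕ} (A : ∀ n, Matrix (Fin (I n)) (Fin (I n)) ℝ)
    (X Y : Tensor I) : sylvOpT A (X + Y) = sylvOpT A X + sylvOpT A Y := sylvOp_add _ _ _

lemma sylvOpT_smul {N : ℕ} {I : Fin N → ℕ} (A : ∀ n, Matrix (Fin (I n)) (Fin (I n)) ℝ)
    (c : ℝ) (X : Tensor I) : sylvOpT A (c • X) = c • sylvOpT A X := sylvOp_smul _ _ _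

lemma bicor_key {N : ℕ} {I : Fin N → ℕ}
    (A : ∀ n, Matrix (Fin (I n)) (Fin (I n)) ℝ)
    (D X0 : Tensor I) (k : ℕ)
    (T : BiCORSeq (sylvOp A) (sylvOpT A) D X0 k)
    (hnb1 : ∀ n, n ≤ k → tinner (T.Rs n) (sylvOp A (T.R n)) ≠ 0)
    (hnb2 : ∀ n, n ≤ k → tinner (sylvOpT A (T.Ps n)) (sylvOp A (T.P n)) ≠ 0) :
    ∀ m, m ≤ k → ∀ i j, i < j → j ≤ m →
      tinner (T.Rs j) (sylvOp A (T.R i)) = 0 ∧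
      tinner (T.Rs j) (sylvOp A (T.P i)) = 0 ∧
      tinner (sylvOpT A (T.Ps j)) (sylvOp A (T.P i)) = 0 ∧
      tinner (T.Rs i) (sylvOp A (T.R j)) = 0 ∧
      tinner (sylvOpT A (T.Ps i)) (sylvOp A (T.P j)) = 0 := by
  -- general expansion facts
  have hPR : ∀ i, i ≤ k →
      T.P i = T.R i + (if i = 0 then (0:ℝ) else T.b (i-1)) • T.P (i-1) := by
    intro i hik
    match i with
    | 0 => simp [T.hP0]
    | (n+1) => simpa using T.hP n (by omega)
  have hRP : ∀ i, i ≤ k →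
      T.R i = T.P i - (if i = 0 then (0:ℝ) else T.b (i-1)) • T.P (i-1) := by
    intro i hik
    rw [hPR i hik, add_sub_cancel_right]
  have hPsRs : ∀ i, i ≤ k →
      T.Ps i = T.Rs i + (if i = 0 then (0:ℝ) else T.b (i-1)) • T.Ps (i-1) := by
    intro i hik
    match i with
    | 0 => simp [T.hPs0]
    | (n+1) => simpa using T.hPs n (by omega)
  have hRsPs : ∀ i, i ≤ k →
      T.Rs i = T.Ps i - (if i = 0 then (0:ℝ) else T.b (i-1)) • T.Ps (i-1) := by
    intro i hik
    rw [hPsRs i hik, add_sub_cancel_right]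
  have hαLP : ∀ n, n < k → T.a n • sylvOp A (T.P n) = T.R n - T.R (n+1) := by
    intro n hn; rw [T.hR n hn, sub_sub_cancel]
  have hαLTPs : ∀ n, n < k → T.a n • sylvOpT A (T.Ps n) = T.Rs n - T.Rs (n+1) := by
    intro n hn; rw [T.hRs n hn, sub_sub_cancel]
  have ha' : ∀ n, n < k → T.a n ≠ 0 ∧
      T.a n * tinner (sylvOpT A (T.Ps n)) (sylvOp A (T.P n))
        = tinner (T.Rs n) (sylvOp A (T.R n)) := by
    intro n hn
    constructor
    · rw [T.ha n hn]
      exact div_ne_zero (hnb1 n (le_of_lt hn)) (hnb2 n (le_of_lt hn))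
    · rw [T.ha n hn]
      exact div_mul_cancel₀ _ (hnb2 n (le_of_lt hn))
  intro m
  induction m with
  | zero => intro _ i j hij hj; omega
  | succ m IH =>
    intro hm1k i j hij hjm1
    have hmk : m < k := hm1k
    rcases Nat.lt_or_ge j (m+1) with hjm | hjm
    · exact IH (le_of_lt hmk) i j hij (by omega)
    have hj' : j = m + 1 := by omega
    subst hj'
    have him : i ≤ m := by omega
    clear hij hjm hjm1
    have IHg : ∀ i j, i < j → j ≤ m → tinner (T.Rs j) (sylvOp A (T.R i)) = 0 :=
      fun i j h1 h2 => (IH (le_of_lt hmk) i j h1 h2).1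
    have IHp : ∀ i j, i < j → j ≤ m → tinner (T.Rs j) (sylvOp A (T.P i)) = 0 :=
      fun i j h1 h2 => (IH (le_of_lt hmk) i j h1 h2).2.1
    have IHh : ∀ i j, i < j → j ≤ m → tinner (sylvOpT A (T.Ps j)) (sylvOp A (T.P i)) = 0 :=
      fun i j h1 h2 => (IH (le_of_lt hmk) i j h1 h2).2.2.1
    have IHg' : ∀ i j, i < j → j ≤ m → tinner (T.Rs i) (sylvOp A (T.R j)) = 0 :=
      fun i j h1 h2 => (IH (le_of_lt hmk) i j h1 h2).2.2.2.1
    have IHh' : ∀ i j, i < j → j ≤ m → tinner (sylvOpT A (T.Ps i)) (sylvOp A (T.P j)) = 0 :=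
      fun i j h1 h2 => (IH (le_of_lt hmk) i j h1 h2).2.2.2.2
    have habm := (ha' m hmk).2
    have ham := (ha' m hmk).1
    -- Step A
    have stepA : ∀ i, i ≤ m → tinner (T.Rs (m+1)) (sylvOp A (T.R i)) = 0 := by
      intro i him
      have e1 : tinner (T.Rs (m+1)) (sylvOp A (T.R i))
          = tinner (T.Rs m) (sylvOp A (T.R i))
            - T.a m * tinner (sylvOpT A (T.Ps m)) (sylvOp A (T.R i)) := by
        rw [T.hRs m hmk, tinner_sub_left, tinner_smul_left]
      have e2 : tinner (sylvOpT A (T.Ps m)) (sylvOp A (T.R i))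
          = tinner (sylvOpT A (T.Ps m)) (sylvOp A (T.P i))
            - (if i = 0 then (0:ℝ) else T.b (i-1))
              * tinner (sylvOpT A (T.Ps m)) (sylvOp A (T.P (i-1))) := by
        conv_lhs => rw [hRP i (by omega)]
        rw [sylvOp_sub, sylvOp_smul, tinner_sub_right, tinner_smul_right]
      have hterm : (if i = 0 then (0:ℝ) else T.b (i-1))
          * tinner (sylvOpT A (T.Ps m)) (sylvOp A (T.P (i-1))) = 0 := by
        rcases Nat.eq_zero_or_pos i with h0 | h0
        · simp [h0]
        · rw [IHh (i-1) m (by omega) le_rfl, mul_zero]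
      rcases Nat.lt_or_ge i m with hlt | hge
      · rw [e1, e2, IHg i m hlt le_rfl, IHh i m hlt le_rfl, hterm]; ring
      · have heq : m = i := by omega
        subst heq
        rw [e1, e2, hterm]
        linear_combination -habm
    -- Step B
    have stepB : ∀ i, i ≤ m → tinner (T.Rs (m+1)) (sylvOp A (T.P i)) = 0 := by
      intro i him
      have e1 : tinner (T.Rs (m+1)) (sylvOp A (T.P i))
          = tinner (T.Rs m) (sylvOp A (T.P i))
            - T.a m * tinner (sylvOpT A (T.Ps m)) (sylvOp A (T.P i)) := by
        rw [T.hRs m hmk, tinner_sub_left, tinner_smul_left]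
      rcases Nat.lt_or_ge i m with hlt | hge
      · rw [e1, IHp i m hlt le_rfl, IHh i m hlt le_rfl]; ring
      · have heq : m = i := by omega
        subst heq
        have e2 : tinner (T.Rs m) (sylvOp A (T.P m))
            = tinner (T.Rs m) (sylvOp A (T.R m))
              + (if m = 0 then (0:ℝ) else T.b (m-1))
                * tinner (T.Rs m) (sylvOp A (T.P (m-1))) := by
          conv_lhs => rw [hPR m (by omega)]
          rw [sylvOp_add, sylvOp_smul, tinner_add_right, tinner_smul_right]
        have hterm : (if m = 0 then (0:ℝ) else T.b (m-1))
            * tinner (T.Rs m) (sylvOp A (T.P (m-1))) = 0 := by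
          rcases Nat.eq_zero_or_pos m with h0 | h0
          · simp [h0]
          · rw [IHp (m-1) m (by omega) le_rfl, mul_zero]
        rw [e1, e2, hterm]
        linear_combination -habm
    -- Step C
    have stepC : ∀ i, i ≤ m → tinner (T.Rs i) (sylvOp A (T.R (m+1))) = 0 := by
      intro i him
      have e1 : tinner (T.Rs i) (sylvOp A (T.R (m+1)))
          = tinner (T.Rs i) (sylvOp A (T.R m))
            - T.a m * tinner (T.Rs i) (sylvOp A (sylvOp A (T.P m))) := by
        rw [T.hR m hmk, sylvOp_sub, sylvOp_smul, tinner_sub_right, tinner_smul_right]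
      have e2 : tinner (T.Rs i) (sylvOp A (sylvOp A (T.P m)))
          = tinner (sylvOpT A (T.Rs i)) (sylvOp A (T.P m)) :=
        (sylv_adjoint' A (T.Rs i) (sylvOp A (T.P m))).symm
      have e3 : tinner (sylvOpT A (T.Rs i)) (sylvOp A (T.P m))
          = tinner (sylvOpT A (T.Ps i)) (sylvOp A (T.P m))
            - (if i = 0 then (0:ℝ) else T.b (i-1))
              * tinner (sylvOpT A (T.Ps (i-1))) (sylvOp A (T.P m)) := by
        conv_lhs => rw [hRsPs i (by omega)]
        rw [sylvOpT_sub, sylvOpT_smul, tinner_sub_left, tinner_smul_left]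
      have hterm : (if i = 0 then (0:ℝ) else T.b (i-1))
          * tinner (sylvOpT A (T.Ps (i-1))) (sylvOp A (T.P m)) = 0 := by
        rcases Nat.eq_zero_or_pos i with h0 | h0
        · simp [h0]
        · rw [IHh' (i-1) m (by omega) le_rfl, mul_zero]
      rcases Nat.lt_or_ge i m with hlt | hge
      · rw [e1, e2, e3, hterm, IHg' i m hlt le_rfl, IHh' i m hlt le_rfl]; ring
      · have heq : m = i := by omega
        subst heq
        rw [e1, e2, e3, hterm]
        linear_combination -habm
    -- some shared facts for steps D and E
    have hbG : T.b m * tinner (T.Rs m) (sylvOp A (T.R m))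
        = tinner (T.Rs (m+1)) (sylvOp A (T.R (m+1))) := by
      rw [T.hb m hmk]
      exact div_mul_cancel₀ _ (hnb1 m (le_of_lt hmk))
    -- Step D
    have stepD : ∀ i, i ≤ m → tinner (sylvOpT A (T.Ps (m+1))) (sylvOp A (T.P i)) = 0 := by
      intro i him
      have e1 : tinner (sylvOpT A (T.Ps (m+1))) (sylvOp A (T.P i))
          = tinner (sylvOpT A (T.Rs (m+1))) (sylvOp A (T.P i))
            + T.b m * tinner (sylvOpT A (T.Ps m)) (sylvOp A (T.P i)) := by
        rw [T.hPs m hmk, sylvOpT_add, sylvOpT_smul, tinner_add_left, tinner_smul_left]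
      have e2 : tinner (sylvOpT A (T.Rs (m+1))) (sylvOp A (T.P i))
          = tinner (T.Rs (m+1)) (sylvOp A (sylvOp A (T.P i))) :=
        sylv_adjoint' A (T.Rs (m+1)) (sylvOp A (T.P i))
      have e3 : T.a i * tinner (T.Rs (m+1)) (sylvOp A (sylvOp A (T.P i)))
          = tinner (T.Rs (m+1)) (sylvOp A (T.R i))
            - tinner (T.Rs (m+1)) (sylvOp A (T.R (i+1))) := by
        rw [← tinner_smul_right, ← sylvOp_smul, hαLP i (by omega), sylvOp_sub,
          tinner_sub_right]
      rcases Nat.lt_or_ge i m with hlt | hge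
      · have hai := (ha' i (by omega)).1
        have hz : T.a i * tinner (T.Rs (m+1)) (sylvOp A (sylvOp A (T.P i))) = 0 := by
          rw [e3, stepA i (by omega), stepA (i+1) (by omega)]; ring
        have hz2 : tinner (T.Rs (m+1)) (sylvOp A (sylvOp A (T.P i))) = 0 :=
          (mul_eq_zero.mp hz).resolve_left hai
        rw [e1, e2, hz2, IHh i m hlt le_rfl]; ring
      · have heq : m = i := by omega
        subst heq
        have key : T.a m * tinner (T.Rs (m+1)) (sylvOp A (sylvOp A (T.P m)))
            = - tinner (T.Rs (m+1)) (sylvOp A (T.R (m+1))) := by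
          rw [e3, stepA m le_rfl]; ring
        have hz : T.a m * (tinner (T.Rs (m+1)) (sylvOp A (sylvOp A (T.P m)))
            + T.b m * tinner (sylvOpT A (T.Ps m)) (sylvOp A (T.P m))) = 0 := by
          linear_combination key + T.b m * habm + hbG
        rw [e1, e2]
        exact (mul_eq_zero.mp hz).resolve_left ham
    -- Step E
    have stepE : ∀ i, i ≤ m → tinner (sylvOpT A (T.Ps i)) (sylvOp A (T.P (m+1))) = 0 := by
      intro i him
      have e1 : tinner (sylvOpT A (T.Ps i)) (sylvOp A (T.P (m+1)))
          = tinner (sylvOpT A (T.Ps i)) (sylvOp A (T.R (m+1)))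
            + T.b m * tinner (sylvOpT A (T.Ps i)) (sylvOp A (T.P m)) := by
        rw [T.hP m hmk, sylvOp_add, sylvOp_smul, tinner_add_right, tinner_smul_right]
      have e3 : T.a i * tinner (sylvOpT A (T.Ps i)) (sylvOp A (T.R (m+1)))
          = tinner (T.Rs i) (sylvOp A (T.R (m+1)))
            - tinner (T.Rs (i+1)) (sylvOp A (T.R (m+1))) := by
        rw [← tinner_smul_left, hαLTPs i (by omega), tinner_sub_left]
      rcases Nat.lt_or_ge i m with hlt | hge
      · have hai := (ha' i (by omega)).1
        have hz : T.a i * tinner (sylvOpT A (T.Ps i)) (sylvOp A (T.R (m+1))) = 0 := by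
          rw [e3, stepC i (by omega), stepC (i+1) (by omega)]; ring
        have hz2 : tinner (sylvOpT A (T.Ps i)) (sylvOp A (T.R (m+1))) = 0 :=
          (mul_eq_zero.mp hz).resolve_left hai
        rw [e1, hz2, IHh' i m hlt le_rfl]; ring
      · have heq : m = i := by omega
        subst heq
        have key : T.a m * tinner (sylvOpT A (T.Ps m)) (sylvOp A (T.R (m+1)))
            = - tinner (T.Rs (m+1)) (sylvOp A (T.R (m+1))) := by
          rw [e3, stepC m le_rfl]; ring
        have hz : T.a m * (tinner (sylvOpT A (T.Ps m)) (sylvOp A (T.R (m+1)))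
            + T.b m * tinner (sylvOpT A (T.Ps m)) (sylvOp A (T.P m))) = 0 := by
          linear_combination key + T.b m * habm + hbG
        rw [e1]
        exact (mul_eq_zero.mp hz).resolve_left ham
    exact ⟨stepA i him, stepB i him, stepD i him, stepC i him, stepE i him⟩

/-- orthogonality of TBiCOR sequences: with no breakdown up to
step `k`, `⟨L(R_i), R_j*⟩ = 0` and `⟨L(P_i), L^T(P_j*)⟩ = 0` for `i ≠ j`. -/
theorem tbicor_orthogonality {N : ℕ} (hN : 1 ≤ N) (I : Fin N → ℕ)
    (hI : ∀ n, 0 < I n)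
    (A : ∀ n, Matrix (Fin (I n)) (Fin (I n)) ℝ)
    (D X0 : Tensor I) (k : ℕ)
    (T : BiCORSeq (sylvOp A) (sylvOpT A) D X0 k)
    (hnb1 : ∀ n, n ≤ k → tinner (T.Rs n) (sylvOp A (T.R n)) ≠ 0)
    (hnb2 : ∀ n, n ≤ k → tinner (sylvOpT A (T.Ps n)) (sylvOp A (T.P n)) ≠ 0)
    (i j : ℕ) (hi : i ≤ k) (hj : j ≤ k) (hij : i ≠ j) :
    tinner (sylvOp A (T.R i)) (T.Rs j) = 0 ∧
      tinner (sylvOp A (T.P i)) (sylvOpT A (T.Ps j)) = 0 := by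
  have key := bicor_key A D X0 k T hnb1 hnb2 k le_rfl
  rcases Nat.lt_or_ge i j with h | h
  · exact ⟨by rw [tinner_comm]; exact (key i j h hj).1,
      by rw [tinner_comm]; exact (key i j h hj).2.2.1⟩
  · have h' : j < i := by omega
    exact ⟨by rw [tinner_comm]; exact (key j i h' hi).2.2.2.1,
      by rw [tinner_comm]; exact (key j i h' hi).2.2.2.2⟩
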